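/- Let G be a non-trivial finitely generated group. Then the regular wreath product G ≀ ℤ is finitely invariably generated. In particular, every finitely generated group embeds into a finitely invariably generated group. -/

import Mathlib

/-!
Let `T` be a finite generating set of `G` and `t` the generator of `ℤ`, and write `g⁽ʸ⁾` for `g`
placed at the coordinate `y` (so `1` is the identity of `ℤ` written multiplicatively). Then
`{g⁽¹⁾, g⁽¹⁾t : g ∈ T} ∪ {t}` invariably generates `G ≀ ℤ`. Let `K` be generated by arbitrary
conjugates of these elements. The conjugate `u` of `t` still maps to a generator of `ℤ`. For `n`
large compared with the conjugators, the `n`-th powers of the conjugates of `g⁽¹⁾t` and of `t`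
have the same image in `ℤ` and, at a fixed far-away coordinate `z`, the values `g` and `1`; so the
base part of `K` takes every value at `z`. Hence the `g ∈ G` with `g⁽ᶻ⁾ ∈ K` form a normal
subgroup of `G`. Conjugation by powers of `u` moves the conjugates of the `g⁽¹⁾` to coordinate
`z` at the cost of conjugating their values, so this subgroup contains `T` and is `G`. Moving
back, `K` contains every `g⁽ʸ⁾`, hence the base, hence everything. Embedding `G` as a coordinate
subgroup gives the second claim.
-/

open Function SemidirectProduct

/-- A subset `S` invariably generates `K` if replacing each element of `S` by an
arbitrary conjugate always yields a generating set of `K`. -/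
def InvariablyGenerates (K : Type*) [Group K] (S : Set K) : Prop :=
  ∀ a : K → K, Subgroup.closure ((fun s => (a s)⁻¹ * s * a s) '' S) = ⊤

/-- `K` is invariably generated if `K` invariably generates itself. -/
def IsIG (K : Type*) [Group K] : Prop :=
  InvariablyGenerates K Set.univ

/-- `K` is finitely invariably generated if some finite subset invariably generates it. -/
def IsFIG (K : Type*) [Group K] : Prop :=
  ∃ S : Set K, S.Finite ∧ InvariablyGenerates K S

/-- The base of the wreath product `G ≀_X H`: the restricted direct product
`⨁_{x ∈ X} G`, realized as the finitely supported functions `X → G`. -/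
def WreathBase (G X : Type*) [Group G] : Subgroup (X → G) where
  carrier := {f | (mulSupport f).Finite}
  one_mem' := by simp
  mul_mem' {f g} hf hg := (Set.Finite.union hf hg).subset (mulSupport_mul f g)
  inv_mem' {f} hf := by simpa using hf

lemma mem_wreathBase {G X : Type*} [Group G] {f : X → G} :
    f ∈ WreathBase G X ↔ (mulSupport f).Finite := Iff.rfl

/-- The permutation action of `H` on the base, `(h • f) x = f (h⁻¹ • x)`, so that in the
wreath product conjugation by `h` (i.e. `h · g^{(x)} · h⁻¹`) sends the coordinate subgroup
`G_x` to `G_{h • x}`; equivalently `h⁻¹ · g^{(x)} · h = g^{(h⁻¹ • x)}`, which is the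
left-action rendering of "conjugation multiplies indices on the right". -/
def wreathAut (G H X : Type*) [Group G] [Group H] [MulAction H X] :
    H →* MulAut (WreathBase G X) where
  toFun h :=
    { toFun := fun f => ⟨fun x => (f : X → G) (h⁻¹ • x),
        mem_wreathBase.mpr (((mem_wreathBase.mp f.2).image (h • ·)).subset
          fun x hx => ⟨h⁻¹ • x, hx, by simp⟩)⟩
      invFun := fun f => ⟨fun x => (f : X → G) (h • x),
        mem_wreathBase.mpr (((mem_wreathBase.mp f.2).image (h⁻¹ • ·)).subset
          fun x hx => ⟨h • x, hx, by simp⟩)⟩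
      left_inv := fun f => Subtype.ext (funext fun x => by simp)
      right_inv := fun f => Subtype.ext (funext fun x => by simp)
      map_mul' := fun f g => Subtype.ext (funext fun x => by simp) }
  map_one' := by
    ext f x
    simp
  map_mul' h₁ h₂ := by
    ext f x
    simp [mul_smul]

/-- The restricted wreath product `G ≀_X H`. -/
abbrev WreathProduct (G H X : Type*) [Group G] [Group H] [MulAction H X] :=
  WreathBase G X ⋊[wreathAut G H X] H

open scoped Classical in
/-- `g^{(y)}`: the element of the base which is `g` in coordinate `y` and trivial elsewhere. -/
noncomputable def WreathBase.single {G : Type*} (X : Type*) [Group G] (y : X) :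
    G →* WreathBase G X where
  toFun g := ⟨fun x => if x = y then g else 1,
    mem_wreathBase.mpr ((Set.finite_singleton y).subset fun x hx => by
      by_contra hxy
      exact hx (if_neg hxy))⟩
  map_one' := Subtype.ext (funext fun x => by simp)
  map_mul' g₁ g₂ := Subtype.ext (funext fun x => by by_cases h : x = y <;> simp [h])

/-- The embedding of `G` onto the coordinate subgroup `G_y` of the wreath product. -/
noncomputable def coordHom (G H : Type*) {X : Type*} [Group G] [Group H] [MulAction H X]
    (y : X) : G →* WreathProduct G H X :=
  SemidirectProduct.inl.comp (WreathBase.single X y)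

/-- `H_X` is of torsion-type if there is `y ∈ X` such that for every `x` in the `H`-orbit
of `y` and every `k ∈ H`, the `⟨k⟩`-orbit of `x` is finite. -/
def IsTorsionType (H X : Type*) [Group H] [MulAction H X] : Prop :=
  ∃ y : X, ∀ x ∈ MulAction.orbit H y, ∀ k : H, (Set.range fun n : ℤ => k ^ n • x).Finite

/-- A `Γ_z`-set: a set of base elements containing, for every `g ∈ G`, an element whose
coordinate at `z` is `g`. -/
def IsGammaSet {G X : Type*} [Group G] (z : X) (Γ : Set (WreathBase G X)) : Prop :=
  ∀ g : G, ∃ f ∈ Γ, (f : X → G) z = g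

/-- The action of `H` on the base `⨁_{h ∈ H} G` of the regular wreath product `G ≀ H`,
given by right multiplication on the index set: `(φ h f) x = f (x * h)`, so that
`h⁻¹ · g^{(x)} · h = g^{(x · h)}`. -/
def regularWreathAut (G H : Type*) [Group G] [Group H] : H →* MulAut (WreathBase G H) where
  toFun h :=
    { toFun := fun f => ⟨fun x => (f : H → G) (x * h),
        mem_wreathBase.mpr (((mem_wreathBase.mp f.2).image (· * h⁻¹)).subset
          fun x hx => ⟨x * h, hx, by simp⟩)⟩
      invFun := fun f => ⟨fun x => (f : H → G) (x * h⁻¹),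
        mem_wreathBase.mpr (((mem_wreathBase.mp f.2).image (· * h)).subset
          fun x hx => ⟨x * h⁻¹, hx, by simp⟩)⟩
      left_inv := fun f => Subtype.ext (funext fun x => by simp)
      right_inv := fun f => Subtype.ext (funext fun x => by simp)
      map_mul' := fun f g => Subtype.ext (funext fun x => by simp) }
  map_one' := by
    ext f x
    simp
  map_mul' h₁ h₂ := by
    ext f x
    simp [mul_assoc]

/-- The regular wreath product `G ≀ H`: the base is `⨁_{h ∈ H} G` and `H` acts by
permuting coordinates via right multiplication on the index set `H`. -/
abbrev RegularWreath (G H : Type*) [Group G] [Group H] :=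
  WreathBase G H ⋊[regularWreathAut G H] H

namespace SemidirectProduct

variable {N K : Type*} [Group N] [Group K] {φ : K →* MulAut N}

lemma inv_mul_inl_mul (a : N ⋊[φ] K) (n : N) :
    a⁻¹ * inl n * a = inl (φ a.right⁻¹ (a.left⁻¹ * n * a.left)) := by
  ext <;> simp [mul_left, inv_left, mul_assoc]

lemma right_pow (a : N ⋊[φ] K) (n : ℕ) : (a ^ n).right = a.right ^ n :=
  map_pow rightHom a n

lemma left_mul_inv_of_right_eq {a b : N ⋊[φ] K} (h : a.right = b.right) :
    (a * b⁻¹).left = a.left * b.left⁻¹ := by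
  simp [mul_left, inv_left, h]

end SemidirectProduct

namespace WreathBase

variable {G X : Type*} [Group G]

@[simp]
lemma single_apply_self (y : X) (g : G) : (single X y g : X → G) y = g := by
  simp [single]

lemma single_apply_of_ne {x y : X} (h : x ≠ y) (g : G) : (single X y g : X → G) x = 1 := by
  simp [single, h]

lemma single_injective (y : X) : Injective (single (G := G) X y) := fun g g' h => by
  simpa using congr_arg (fun f : WreathBase G X => (f : X → G) y) h

lemma conj_single (b : WreathBase G X) (y : X) (g : G) :
    b⁻¹ * single X y g * b = single X y (((b : X → G) y)⁻¹ * g * (b : X → G) y) := by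
  ext x
  by_cases h : x = y
  · subst h
    simp
  · simp [single_apply_of_ne h]

lemma closure_iUnion_range_single :
    Subgroup.closure (⋃ y, Set.range (single (G := G) X y)) = ⊤ := by
  classical
  set K := Subgroup.closure (⋃ y, Set.range (single (G := G) X y))
  suffices ∀ (F : Finset X) (b : WreathBase G X), mulSupport (b : X → G) ⊆ F → b ∈ K from
    (Subgroup.eq_top_iff' K).mpr fun b => this _ b (mem_wreathBase.mp b.2).coe_toFinset.ge
  intro F
  induction F using Finset.induction_on with
  | empty =>
    intro b hb
    have : b = 1 :=
      Subtype.ext <| mulSupport_eq_empty_iff.mp <| Set.subset_empty_iff.mp (by simpa using hb)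
    exact this ▸ one_mem K
  | insert y F _ ih =>
    intro b hb
    rw [← mul_inv_cancel_left (single X y ((b : X → G) y)) b]
    refine mul_mem (Subgroup.subset_closure (Set.mem_iUnion.mpr ⟨y, _, rfl⟩)) (ih _ fun x hx => ?_)
    by_cases hxy : x = y
    · subst hxy
      simp at hx
    · have : (b : X → G) x ≠ 1 := by simpa [single_apply_of_ne hxy] using hx
      simpa [hxy] using hb this

end WreathBase

namespace RegularWreath

open WreathBase

section

variable {G H : Type*} [Group G] [Group H]

lemma regularWreathAut_apply (h : H) (f : WreathBase G H) (x : H) :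
    (regularWreathAut G H h f : H → G) x = (f : H → G) (x * h) := rfl

lemma regularWreathAut_single (h y : H) (g : G) :
    regularWreathAut G H h (single H y g) = single H (y * h⁻¹) g := by
  ext x
  by_cases hx : x = y * h⁻¹
  · simp [regularWreathAut_apply, hx]
  · rw [regularWreathAut_apply, single_apply_of_ne hx, single_apply_of_ne]
    exact fun h' => hx (eq_mul_inv_of_mul_eq h')

lemma conj_inl_single (a : RegularWreath G H) (y : H) (g : G) :
    a⁻¹ * inl (single H y g) * a =
      inl (single H (y * a.right) (((a.left : H → G) y)⁻¹ * g * (a.left : H → G) y)) := by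
  rw [inv_mul_inl_mul, conj_single, regularWreathAut_single, inv_inv]

lemma regularWreathAut_symm_apply (h : H) (f : WreathBase G H) (x : H) :
    ((regularWreathAut G H h).symm f : H → G) x = (f : H → G) (x * h⁻¹) := rfl

lemma conj_left_apply (a w : RegularWreath G H) (x : H) :
    ((a⁻¹ * w * a).left : H → G) x =
      ((a.left : H → G) (x * a.right⁻¹))⁻¹ * (w.left : H → G) (x * a.right⁻¹) *
        (a.left : H → G) (x * a.right⁻¹ * w.right) := by
  simp [mul_left, inv_left, regularWreathAut_apply, regularWreathAut_symm_apply, mul_assoc]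

noncomputable def singleSubgroup (K : Subgroup (RegularWreath G H)) (y : H) : Subgroup G :=
  K.comap (inl.comp (single H y))

def evalSubgroup (K : Subgroup (RegularWreath G H)) (z : H) : Subgroup G :=
  (K.comap inl).map ((Pi.evalMonoidHom (fun _ : H => G) z).comp (WreathBase G H).subtype)

variable {K : Subgroup (RegularWreath G H)}

lemma mem_evalSubgroup {z : H} {g : G} :
    g ∈ evalSubgroup K z ↔ ∃ b : WreathBase G H, inl b ∈ K ∧ (b : H → G) z = g :=
  Iff.rfl

lemma exists_conj_mem_singleSubgroup_mul {k : RegularWreath G H} (hk : k ∈ K) (y : H) :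
    ∃ e : G, ∀ g ∈ singleSubgroup K y, e⁻¹ * g * e ∈ singleSubgroup K (y * k.right) :=
  ⟨(k.left : H → G) y, fun g hg => by
    have := mul_mem (mul_mem (inv_mem hk) hg) hk
    rwa [MonoidHom.comp_apply, conj_inl_single] at this⟩

lemma singleSubgroup_normal {z : H} (hz : evalSubgroup K z = ⊤) :
    (singleSubgroup K z).Normal where
  conj_mem g hg v := by
    obtain ⟨b, hb, hbz⟩ := mem_evalSubgroup.mp (hz ▸ Subgroup.mem_top v⁻¹)
    have := mul_mem (mul_mem (inv_mem hb) hg) hb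
    rwa [MonoidHom.comp_apply, ← map_inv, ← map_mul, ← map_mul, conj_single, hbz, inv_inv] at this

lemma eq_top_of_singleSubgroup_eq_top (hr : K.map rightHom = ⊤)
    (hs : ∀ y, singleSubgroup K y = ⊤) : K = ⊤ := by
  have hbase : (inl : WreathBase G H →* RegularWreath G H).range ≤ K := by
    rintro _ ⟨b, rfl⟩
    suffices Subgroup.closure (⋃ y, Set.range (single (G := G) H y)) ≤ K.comap inl by
      rw [closure_iUnion_range_single, top_le_iff] at this
      exact Subgroup.mem_comap.mp (this ▸ Subgroup.mem_top b)
    refine (Subgroup.closure_le _).mpr (Set.iUnion_subset fun y => ?_)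
    rintro _ ⟨g, rfl⟩
    exact (hs y).ge (Subgroup.mem_top g)
  rw [range_inl_eq_ker_rightHom] at hbase
  rw [← sup_eq_left.mpr hbase, ← Subgroup.comap_map_eq, hr, Subgroup.comap_top]

theorem eq_top_of_evalSubgroup_eq_top {T : Set G} (hT : Subgroup.closure T = ⊤)
    (hr : K.map rightHom = ⊤) {z : H} (hz : evalSubgroup K z = ⊤)
    (hconj : ∀ g ∈ T, ∃ y e, e⁻¹ * g * e ∈ singleSubgroup K y) : K = ⊤ := by
  have transport : ∀ y y', ∃ e : G, ∀ g ∈ singleSubgroup K y, e⁻¹ * g * e ∈ singleSubgroup K y' :=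
    fun y y' => by
      obtain ⟨k, hk, hkr⟩ := Subgroup.mem_map.mp (hr ▸ Subgroup.mem_top (y⁻¹ * y') :
        y⁻¹ * y' ∈ K.map rightHom)
      have := exists_conj_mem_singleSubgroup_mul hk y
      rwa [← rightHom_eq_right, hkr, mul_inv_cancel_left] at this
  have hnormal := singleSubgroup_normal hz
  have hzT : singleSubgroup K z = ⊤ := by
    rw [eq_top_iff, ← hT, Subgroup.closure_le]
    intro g hg
    obtain ⟨y, e, he⟩ := hconj g hg
    obtain ⟨e', he'⟩ := transport y z
    have := hnormal.conj_mem _ (he' _ he) (e * e')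
    simpa [mul_assoc] using this
  refine eq_top_of_singleSubgroup_eq_top hr fun y => (Subgroup.eq_top_iff' _).mpr fun g => ?_
  obtain ⟨e, he⟩ := transport z y
  simpa [mul_assoc] using he (e * g * e⁻¹) (hzT ▸ Subgroup.mem_top _)

end

section

open Multiplicative Filter

variable {G : Type*} [Group G]

def IsBoundedBy (N : ℕ) (w : RegularWreath G (Multiplicative ℤ)) : Prop :=
  |toAdd w.right| ≤ N ∧ ∀ m : ℤ, (N : ℤ) < |m| → (w.left : Multiplicative ℤ → G) (ofAdd m) = 1

lemma eventually_isBoundedBy (w : RegularWreath G (Multiplicative ℤ)) :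
    ∀ᶠ N in atTop, IsBoundedBy N w := by
  obtain ⟨M, hM⟩ := ((mem_wreathBase.mp w.left.2).image fun x => |toAdd x|).bddAbove
  refine eventually_atTop.mpr ⟨(max M |toAdd w.right|).toNat, fun N hN => ⟨?_, fun m hm => ?_⟩⟩
  · omega
  · by_contra hne
    have := hM ⟨ofAdd m, hne, rfl⟩
    simp only [toAdd_ofAdd] at this
    omega

lemma left_pow_inl_single_mul_inr_apply (g : G) (n : ℕ) (m : ℤ) :
    (((inl (single _ 1 g) * inr (ofAdd 1) : RegularWreath G (Multiplicative ℤ)) ^ n).left :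
        Multiplicative ℤ → G) (ofAdd m) = if -(n : ℤ) < m ∧ m ≤ 0 then g else 1 := by
  induction n with
  | zero => simp
  | succ n ih =>
    rw [pow_succ, mul_left, Subgroup.coe_mul, Pi.mul_apply, ih, right_pow, regularWreathAut_apply]
    simp only [mul_right, right_inl, right_inr, one_mul, mul_left, left_inl, left_inr, map_one,
      mul_one, ← ofAdd_nsmul, ← ofAdd_add, nsmul_one]
    by_cases hm : m + n = 0
    · rw [hm, ofAdd_zero, single_apply_self, if_neg (by omega), if_pos (by omega), one_mul]
    · rw [single_apply_of_ne (by rwa [Ne, ← ofAdd_zero, ofAdd.injective.eq_iff]), mul_one]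
      exact if_congr (by omega) rfl rfl

/-- With `n = 4N + 2` and `z = -(2N + 1)`, both coordinates `z - r` and `z - r + n` at which
`a⁻¹ xⁿ a` reads the base part of `a` lie outside `[-N, N]`. -/
lemma left_conj_pow_apply {N : ℕ} {a x : RegularWreath G (Multiplicative ℤ)} (ha : IsBoundedBy N a)
    (hx : x.right = ofAdd 1) :
    (((a⁻¹ * x * a) ^ (4 * N + 2)).left : Multiplicative ℤ → G) (ofAdd (-(2 * N + 1))) =
      ((x ^ (4 * N + 2)).left : Multiplicative ℤ → G) (ofAdd (-(2 * N + 1) - toAdd a.right)) := by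
  have hconj : (a⁻¹ * x * a) ^ (4 * N + 2) = a⁻¹ * x ^ (4 * N + 2) * a := by
    simpa using conj_pow (a := a⁻¹) (b := x) (i := 4 * N + 2)
  obtain ⟨hr, hsupp⟩ := ha
  set r := toAdd a.right
  have har : a.right = ofAdd r := rfl
  have hr' := abs_le.mp hr
  have hpos : ofAdd (-(2 * N + 1) : ℤ) * (ofAdd r)⁻¹ = ofAdd (-(2 * N + 1) - r) := by
    rw [← ofAdd_neg, ← ofAdd_add, sub_eq_add_neg]
  have hpos' : ofAdd (-(2 * N + 1) : ℤ) * (ofAdd r)⁻¹ * ofAdd 1 ^ (4 * N + 2) =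
      ofAdd (2 * N + 1 - r) := by
    rw [← toAdd.injective.eq_iff]
    simp only [toAdd_mul, toAdd_inv, toAdd_pow, toAdd_ofAdd, nsmul_eq_mul]
    push_cast
    ring
  rw [hconj, conj_left_apply, right_pow, hx, har, hpos', hpos,
    hsupp _ (lt_abs.mpr (Or.inr (by omega))), hsupp _ (lt_abs.mpr (Or.inl (by omega))),
    inv_one, one_mul, mul_one]

lemma mem_evalSubgroup_of_conj_mem {K : Subgroup (RegularWreath G (Multiplicative ℤ))} {N : ℕ}
    {a b : RegularWreath G (Multiplicative ℤ)} (ha : IsBoundedBy N a) (hb : IsBoundedBy N b)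
    {g : G} (hga : a⁻¹ * (inl (single _ 1 g) * inr (ofAdd 1)) * a ∈ K)
    (htb : b⁻¹ * inr (ofAdd 1) * b ∈ K) :
    g ∈ evalSubgroup K (ofAdd (-(2 * N + 1))) := by
  set u := (a⁻¹ * (inl (single _ 1 g) * inr (ofAdd 1)) * a) ^ (4 * N + 2)
  set v := (b⁻¹ * inr (ofAdd 1) * b) ^ (4 * N + 2)
  have hright : u.right = v.right := by simp [u, v, right_pow]
  have huv : inl (u * v⁻¹).left = u * v⁻¹ := by
    ext
    · rfl
    · simp [hright]
  refine mem_evalSubgroup.mpr ⟨(u * v⁻¹).left,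
    huv ▸ mul_mem (pow_mem hga (4 * N + 2)) (inv_mem (pow_mem htb (4 * N + 2))), ?_⟩
  have hu := left_conj_pow_apply ha (x := inl (single _ 1 g) * inr (ofAdd 1)) rfl
  have hv := left_conj_pow_apply hb (x := inr (ofAdd 1)) rfl
  obtain ⟨hr, -⟩ := ha
  have hr' := abs_le.mp hr
  rw [left_mul_inv_of_right_eq hright, Subgroup.coe_mul, Pi.mul_apply, InvMemClass.coe_inv,
    Pi.inv_apply, hu, hv, left_pow_inl_single_mul_inr_apply, if_pos (by omega), ← map_pow,
    left_inr]
  simp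

theorem isFIG_int (hG : Group.FG G) : IsFIG (RegularWreath G (Multiplicative ℤ)) := by
  obtain ⟨T, hT, hTfin⟩ := Group.fg_iff.mp hG
  let t : RegularWreath G (Multiplicative ℤ) := inr (ofAdd 1)
  let S := (fun g => inl (single _ 1 g)) '' T ∪ (fun g => inl (single _ 1 g) * t) '' T ∪ {t}
  have hSfin : S.Finite := ((hTfin.image _).union (hTfin.image _)).union (Set.finite_singleton t)
  refine ⟨S, hSfin, fun a => ?_⟩
  set K := Subgroup.closure ((fun s => (a s)⁻¹ * s * a s) '' S)
  have hmem : ∀ s ∈ S, (a s)⁻¹ * s * a s ∈ K := fun s hs => Subgroup.subset_closure ⟨s, hs, rfl⟩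
  have ht : t ∈ S := Or.inr rfl
  obtain ⟨N, hN⟩ := (hSfin.eventually_all.mpr fun s _ => eventually_isBoundedBy (a s)).exists
  have hr : K.map rightHom = ⊤ := by
    refine (Subgroup.eq_top_iff' _).mpr fun h =>
      ⟨((a t)⁻¹ * t * a t) ^ toAdd h, zpow_mem (hmem t ht) _, ?_⟩
    have hu : rightHom ((a t)⁻¹ * t * a t) = ofAdd 1 := by simp [t, mul_comm]
    rw [map_zpow, hu, ← ofAdd_zsmul, smul_eq_mul, mul_one, ofAdd_toAdd]
  refine eq_top_of_evalSubgroup_eq_top hT hr (z := ofAdd (-(2 * N + 1))) ?_ fun g hg => ?_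
  · rw [eq_top_iff, ← hT, Subgroup.closure_le]
    intro g hg
    have hgS : inl (single _ 1 g) * t ∈ S := Or.inl (Or.inr ⟨g, hg, rfl⟩)
    exact mem_evalSubgroup_of_conj_mem (hN _ hgS) (hN t ht) (hmem _ hgS) (hmem t ht)
  · have := hmem _ (Or.inl (Or.inl ⟨g, hg, rfl⟩))
    rw [conj_inl_single] at this
    exact ⟨_, _, this⟩

end

end RegularWreath

theorem stmt_5.{u} (G : Type u) [Group G] [Nontrivial G] (hG : Group.FG G) :
    IsFIG (RegularWreath G (Multiplicative ℤ)) ∧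
      ∀ (K : Type u) [Group K], Group.FG K →
        ∃ (L : Type u) (_ : Group L), IsFIG L ∧ ∃ f : K →* L, Function.Injective f :=
  ⟨RegularWreath.isFIG_int hG, fun K _ hK => ⟨RegularWreath K (Multiplicative ℤ), inferInstance,
    RegularWreath.isFIG_int hK, SemidirectProduct.inl.comp (WreathBase.single _ 1),
    SemidirectProduct.inl_injective.comp (WreathBase.single_injective 1)⟩⟩
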